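/- arXiv:2311.06868 — 2 statements merged into one kernel-verified Lean document; each statement's English description precedes it below -/
import Mathlib

section
/- Let (Ω, μ) be a probability space and let D, Y, F, Z be random variables on Ω taking values in finite types. Suppose (i) Z is conditionally independent of the pair (D, Y) given F, i.e. for all values z, d, y, f one has P(Z=z, D=d, Y=y, F=f) · P(F=f) = P(Z=z, F=f) · P(D=d, Y=y, F=f) (the Markov chain (D,Y) → F → Z); and (ii) Y is independent of D, i.e. P(Y=y, D=d) = P(Y=y) · P(D=d) for all y, d. Then I(Z;D) ≤ I(Z;F) − I(Z;Y). -/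
open MeasureTheory
set_option linter.unusedSectionVars false
set_option maxHeartbeats 1000000

/-- Probability that the random variable `X` takes the value `x`. -/
noncomputable def prob {Ω : Type*} [MeasurableSpace Ω] (μ : Measure Ω)
    {α : Type*} (X : Ω → α) (x : α) : ℝ :=
  (μ (X ⁻¹' {x})).toReal

/-- Shannon entropy (natural logarithm) of a finitely-valued random variable. -/
noncomputable def entropy {Ω : Type*} [MeasurableSpace Ω] (μ : Measure Ω)
    {α : Type*} [Fintype α] (X : Ω → α) : ℝ :=
  -∑ x, prob μ X x * Real.log (prob μ X x)

/-- Conditional entropy `H(X|Y) = H(X,Y) - H(Y)`. -/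
noncomputable def condEntropy {Ω : Type*} [MeasurableSpace Ω] (μ : Measure Ω)
    {α β : Type*} [Fintype α] [Fintype β] (X : Ω → α) (Y : Ω → β) : ℝ :=
  entropy μ (fun ω => (X ω, Y ω)) - entropy μ Y

/-- Mutual information `I(X;Y) = H(X) + H(Y) - H(X,Y)`. -/
noncomputable def mutualInfo {Ω : Type*} [MeasurableSpace Ω] (μ : Measure Ω)
    {α β : Type*} [Fintype α] [Fintype β] (X : Ω → α) (Y : Ω → β) : ℝ :=
  entropy μ X + entropy μ Y - entropy μ (fun ω => (X ω, Y ω))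

/-- Conditional mutual information `I(X;Y|Z) = H(X|Z) + H(Y|Z) - H(⟨X,Y⟩|Z)`. -/
noncomputable def condMutualInfo {Ω : Type*} [MeasurableSpace Ω] (μ : Measure Ω)
    {α β γ : Type*} [Fintype α] [Fintype β] [Fintype γ]
    (X : Ω → α) (Y : Ω → β) (Z : Ω → γ) : ℝ :=
  condEntropy μ X Z + condEntropy μ Y Z - condEntropy μ (fun ω => (X ω, Y ω)) Z

section Basics
variable {Ω : Type*} [MeasurableSpace Ω] (μ : Measure Ω) [IsProbabilityMeasure μ]
variable {α β : Type*} [Fintype α]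
  [MeasurableSpace α] [MeasurableSingletonClass α]
  [MeasurableSpace β] [MeasurableSingletonClass β]

lemma my_prob_nonneg {α' : Type*} (X : Ω → α') (x : α') : 0 ≤ prob μ X x :=
  ENNReal.toReal_nonneg

lemma measure_eq_sum_prob {α' : Type*} [MeasurableSpace α'] [MeasurableSingletonClass α']
    {X : Ω → α'} (hX : Measurable X) {ι : Type*} (s : Finset ι) (e : ι → α')
    (he : Set.InjOn e s) (S : Set Ω) (hS : S = ⋃ i ∈ s, X ⁻¹' {e i}) :
    (μ S).toReal = ∑ i ∈ s, prob μ X (e i) := by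
  rw [hS, measure_biUnion_finset ?_ (fun i _ => hX (measurableSet_singleton (e i)))]
  · exact ENNReal.toReal_sum (fun i _ => measure_ne_top μ _)
  · intro i hi j hj hne
    apply Set.disjoint_left.2
    intro ω h1 h2
    exact hne (he (by simpa using hi) (by simpa using hj) (by simp_all))

lemma prob_comp {X : Ω → α} (hX : Measurable X) (g : α → β) [DecidableEq β] (b : β) :
    prob μ (fun ω => g (X ω)) b
      = ∑ a ∈ Finset.univ.filter (fun a => g a = b), prob μ X a := by
  apply measure_eq_sum_prob μ hX _ _ Function.injective_id.injOn
  ext ω; simp [eq_comm (a := X ω)]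

lemma sum_prob {X : Ω → α} (hX : Measurable X) : ∑ a, prob μ X a = 1 := by
  have h := measure_eq_sum_prob μ hX Finset.univ id Function.injective_id.injOn
    Set.univ (by ext ω; simp)
  simpa using h.symm

lemma prob_le_prob_comp {X : Ω → α} (hX : Measurable X) (g : α → β) (a : α) :
    prob μ X a ≤ prob μ (fun ω => g (X ω)) (g a) := by
  classical
  rw [prob_comp μ hX g (g a)]
  exact Finset.single_le_sum (fun a' _ => my_prob_nonneg μ X a')
    (Finset.mem_filter.2 ⟨Finset.mem_univ a, rfl⟩)

lemma prob_le_prob_comp' {X : Ω → α} (hX : Measurable X) (g : α → β) {T : Ω → β}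
    (hT : T = fun ω => g (X ω)) (a : α) :
    prob μ X a ≤ prob μ T (g a) := by
  rw [hT]; exact prob_le_prob_comp μ hX g a

lemma sum_prob_comp_mul {X : Ω → α} (hX : Measurable X) [Fintype β] (g : α → β) (f : β → ℝ) :
    ∑ b, prob μ (fun ω => g (X ω)) b * f b = ∑ a, prob μ X a * f (g a) := by
  classical
  rw [← Finset.sum_fiberwise Finset.univ g (fun a => prob μ X a * f (g a))]
  refine Finset.sum_congr rfl (fun b _ => ?_)
  rw [prob_comp μ hX g b, Finset.sum_mul]
  refine Finset.sum_congr rfl (fun a ha => ?_)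
  rw [(Finset.mem_filter.1 ha).2]

lemma entropy_comp {X : Ω → α} (hX : Measurable X) [Fintype β] (g : α → β) :
    entropy μ (fun ω => g (X ω))
      = -∑ a, prob μ X a * Real.log (prob μ (fun ω => g (X ω)) (g a)) := by
  unfold entropy
  rw [sum_prob_comp_mul μ hX g (fun b => Real.log (prob μ (fun ω => g (X ω)) b))]

lemma entropy_comp' {X : Ω → α} (hX : Measurable X) [Fintype β] (g : α → β) {T : Ω → β}
    (hT : T = fun ω => g (X ω)) :
    entropy μ T = -∑ a, prob μ X a * Real.log (prob μ T (g a)) := by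
  rw [hT]; exact entropy_comp μ hX g

lemma prob_comp_injective {X : Ω → α} {g : α → β} (hg : Function.Injective g) (a : α) :
    prob μ (fun ω => g (X ω)) (g a) = prob μ X a := by
  have h : (fun ω => g (X ω)) ⁻¹' {g a} = X ⁻¹' {a} := by ext ω; simp [hg.eq_iff]
  rw [prob, prob, h]

lemma entropy_comp_injective {X : Ω → α} (hX : Measurable X) [Fintype β]
    {g : α → β} (hg : Function.Injective g) :
    entropy μ (fun ω => g (X ω)) = entropy μ X := by
  rw [entropy_comp μ hX g]
  unfold entropy
  congr 1
  exact Finset.sum_congr rfl (fun a _ => by rw [prob_comp_injective μ hg])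

lemma entropy_eq_of_comp [Fintype β] {X : Ω → α} (hX : Measurable X)
    {g : α → β} (hg : Function.Injective g) {T : Ω → β}
    (hT : T = fun ω => g (X ω)) : entropy μ T = entropy μ X := by
  rw [hT]; exact entropy_comp_injective μ hX hg

lemma sum_prob_pair_fst {Y : Ω → β} [Fintype β] {X : Ω → α} (hX : Measurable X)
    (hY : Measurable Y) (b : β) :
    ∑ a, prob μ (fun ω => (X ω, Y ω)) (a, b) = prob μ Y b := by
  symm
  apply measure_eq_sum_prob μ (hX.prodMk hY) Finset.univ (fun a => (a, b))
    (fun a _ a' _ h => by simpa using h)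
  ext ω; simp

end Basics

/-- Gibbs-type inequality. -/
lemma kl_aux {ι : Type*} [Fintype ι] (p q : ι → ℝ) (hp : ∀ i, 0 ≤ p i)
    (hq : ∀ i, 0 ≤ q i) (hpos : ∀ i, 0 < p i → 0 < q i)
    (hsum : ∑ i, q i ≤ ∑ i, p i) :
    ∑ i, p i * Real.log (q i) ≤ ∑ i, p i * Real.log (p i) := by
  have key : ∀ i, p i * Real.log (q i) - p i * Real.log (p i) ≤ q i - p i := by
    intro i
    rcases eq_or_lt_of_le (hp i) with h|h
    · rw [← h]; simpa using hq i
    · have hqi := hpos i h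
      have hlog : Real.log (q i / p i) ≤ q i / p i - 1 :=
        Real.log_le_sub_one_of_pos (div_pos hqi h)
      rw [Real.log_div hqi.ne' h.ne'] at hlog
      have h2 := mul_le_mul_of_nonneg_left hlog (le_of_lt h)
      calc p i * Real.log (q i) - p i * Real.log (p i)
          = p i * (Real.log (q i) - Real.log (p i)) := by ring
        _ ≤ p i * (q i / p i - 1) := h2
        _ = q i - p i := by field_simp
  have h2 : ∑ i, (p i * Real.log (q i) - p i * Real.log (p i)) ≤ ∑ i, (q i - p i) :=
    Finset.sum_le_sum (fun i _ => key i)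
  rw [Finset.sum_sub_distrib, Finset.sum_sub_distrib] at h2
  linarith

section Info
variable {Ω : Type*} [MeasurableSpace Ω] (μ : Measure Ω) [IsProbabilityMeasure μ]
variable {α β γ : Type*} [Fintype α] [Fintype β] [Fintype γ]
  [MeasurableSpace α] [MeasurableSingletonClass α]
  [MeasurableSpace β] [MeasurableSingletonClass β]
  [MeasurableSpace γ] [MeasurableSingletonClass γ]
variable {X : Ω → α} {Y : Ω → β} {W : Ω → γ}

lemma entropy_assoc (hX : Measurable X) (hY : Measurable Y) (hW : Measurable W) :
    entropy μ (fun ω => (X ω, (Y ω, W ω))) = entropy μ (fun ω => ((X ω, Y ω), W ω)) := by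
  have hg : Function.Injective (fun m : (α × β) × γ => (m.1.1, (m.1.2, m.2))) := by
    intro m m' h; simp [Prod.ext_iff] at h ⊢; tauto
  exact entropy_eq_of_comp μ ((hX.prodMk hY).prodMk hW) hg rfl

lemma mutualInfo_chain (hX : Measurable X) (hY : Measurable Y) (hW : Measurable W) :
    mutualInfo μ X (fun ω => (Y ω, W ω)) = mutualInfo μ X W + condMutualInfo μ X Y W := by
  unfold mutualInfo condMutualInfo condEntropy
  rw [← entropy_assoc μ hX hY hW]
  ring

lemma mutualInfo_comm (hX : Measurable X) (hY : Measurable Y) :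
    mutualInfo μ X Y = mutualInfo μ Y X := by
  unfold mutualInfo
  have hg : Function.Injective (fun m : β × α => (m.2, m.1)) := by
    intro m m' h; simp [Prod.ext_iff] at h ⊢; tauto
  have h : entropy μ (fun ω => (X ω, Y ω)) = entropy μ (fun ω => (Y ω, X ω)) := by
    exact entropy_eq_of_comp μ (hY.prodMk hX) hg rfl
  rw [h]; ring

lemma mutualInfo_snd_comm (hX : Measurable X) (hY : Measurable Y) (hW : Measurable W) :
    mutualInfo μ X (fun ω => (Y ω, W ω)) = mutualInfo μ X (fun ω => (W ω, Y ω)) := by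
  unfold mutualInfo
  have hg1 : Function.Injective (fun m : γ × β => (m.2, m.1)) := by
    intro m m' h; simp [Prod.ext_iff] at h ⊢; tauto
  have hg2 : Function.Injective (fun m : α × γ × β => (m.1, (m.2.2, m.2.1))) := by
    intro m m' h; simp [Prod.ext_iff] at h ⊢; tauto
  have h1 : entropy μ (fun ω => (Y ω, W ω)) = entropy μ (fun ω => (W ω, Y ω)) := by
    exact entropy_eq_of_comp μ (hW.prodMk hY) hg1 rfl
  have h2 : entropy μ (fun ω => (X ω, (Y ω, W ω))) =
      entropy μ (fun ω => (X ω, (W ω, Y ω))) := by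
    exact entropy_eq_of_comp μ (hX.prodMk (hW.prodMk hY)) hg2 rfl
  rw [h1, h2]

lemma condMutualInfo_comm (hX : Measurable X) (hY : Measurable Y) (hW : Measurable W) :
    condMutualInfo μ X Y W = condMutualInfo μ Y X W := by
  unfold condMutualInfo condEntropy
  have hg : Function.Injective (fun m : (β × α) × γ => ((m.1.2, m.1.1), m.2)) := by
    intro m m' h; simp [Prod.ext_iff] at h ⊢; tauto
  have h : entropy μ (fun ω => ((X ω, Y ω), W ω)) =
      entropy μ (fun ω => ((Y ω, X ω), W ω)) := by
    exact entropy_eq_of_comp μ ((hY.prodMk hX).prodMk hW) hg rfl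
  rw [h]; ring

lemma condMutualInfo_nonneg (hX : Measurable X) (hY : Measurable Y) (hW : Measurable W) :
    0 ≤ condMutualInfo μ X Y W := by
  classical
  have hM : Measurable (fun ω => (X ω, Y ω, W ω)) := hX.prodMk (hY.prodMk hW)
  have e1 : entropy μ (fun ω => (X ω, W ω))
      = -∑ m : α × β × γ, prob μ (fun ω => (X ω, Y ω, W ω)) m *
          Real.log (prob μ (fun ω => (X ω, W ω)) (m.1, m.2.2)) :=
    entropy_comp' μ hM (fun m => (m.1, m.2.2)) rfl
  have e2 : entropy μ (fun ω => (Y ω, W ω))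
      = -∑ m : α × β × γ, prob μ (fun ω => (X ω, Y ω, W ω)) m *
          Real.log (prob μ (fun ω => (Y ω, W ω)) m.2) :=
    entropy_comp' μ hM (fun m => m.2) rfl
  have e3 : entropy μ W
      = -∑ m : α × β × γ, prob μ (fun ω => (X ω, Y ω, W ω)) m *
          Real.log (prob μ W m.2.2) :=
    entropy_comp' μ hM (fun m => m.2.2) rfl
  have hg : Function.Injective (fun m : α × β × γ => ((m.1, m.2.1), m.2.2)) := by
    intro m m' h; simp [Prod.ext_iff] at h ⊢; tauto
  have e4 : entropy μ (fun ω => ((X ω, Y ω), W ω))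
      = entropy μ (fun ω => (X ω, Y ω, W ω)) :=
    entropy_eq_of_comp μ hM hg rfl
  have hM_entropy : entropy μ (fun ω => (X ω, Y ω, W ω))
      = -∑ m : α × β × γ, prob μ (fun ω => (X ω, Y ω, W ω)) m *
          Real.log (prob μ (fun ω => (X ω, Y ω, W ω)) m) := rfl
  -- positivity of marginals at points of positive mass
  have hposu : ∀ m : α × β × γ, 0 < prob μ (fun ω => (X ω, Y ω, W ω)) m →
      0 < prob μ (fun ω => (X ω, W ω)) (m.1, m.2.2) :=
    fun m h => lt_of_lt_of_le h (prob_le_prob_comp' μ hM (fun m => (m.1, m.2.2)) rfl m)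
  have hposv : ∀ m : α × β × γ, 0 < prob μ (fun ω => (X ω, Y ω, W ω)) m →
      0 < prob μ (fun ω => (Y ω, W ω)) m.2 :=
    fun m h => lt_of_lt_of_le h (prob_le_prob_comp' μ hM (fun m => m.2) rfl m)
  have hposc : ∀ m : α × β × γ, 0 < prob μ (fun ω => (X ω, Y ω, W ω)) m →
      0 < prob μ W m.2.2 :=
    fun m h => lt_of_lt_of_le h (prob_le_prob_comp' μ hM (fun m => m.2.2) rfl m)
  -- the sum of q is at most 1
  have hsumq : ∑ m : α × β × γ, (prob μ (fun ω => (X ω, W ω)) (m.1, m.2.2) *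
        prob μ (fun ω => (Y ω, W ω)) m.2 / prob μ W m.2.2) ≤ 1 := by
    have step1 : ∑ m : α × β × γ, (prob μ (fun ω => (X ω, W ω)) (m.1, m.2.2) *
          prob μ (fun ω => (Y ω, W ω)) m.2 / prob μ W m.2.2)
        = ∑ x : α, ∑ y : β, ∑ w : γ, (prob μ (fun ω => (X ω, W ω)) (x, w) *
          prob μ (fun ω => (Y ω, W ω)) (y, w) / prob μ W w) := by
      rw [Fintype.sum_prod_type]
      exact Finset.sum_congr rfl (fun x _ => by rw [Fintype.sum_prod_type])
    rw [step1]
    have step2 : ∑ x : α, ∑ y : β, ∑ w : γ, (prob μ (fun ω => (X ω, W ω)) (x, w) *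
          prob μ (fun ω => (Y ω, W ω)) (y, w) / prob μ W w)
        = ∑ w : γ, ∑ x : α, ∑ y : β, (prob μ (fun ω => (X ω, W ω)) (x, w) *
          prob μ (fun ω => (Y ω, W ω)) (y, w) / prob μ W w) := by
      rw [show (∑ x : α, ∑ y : β, ∑ w : γ, (prob μ (fun ω => (X ω, W ω)) (x, w) *
          prob μ (fun ω => (Y ω, W ω)) (y, w) / prob μ W w))
          = ∑ x : α, ∑ w : γ, ∑ y : β, (prob μ (fun ω => (X ω, W ω)) (x, w) *
          prob μ (fun ω => (Y ω, W ω)) (y, w) / prob μ W w) from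
        Finset.sum_congr rfl (fun x _ => Finset.sum_comm)]
      exact Finset.sum_comm
    rw [step2]
    have step3 : ∀ w : γ, ∑ x : α, ∑ y : β, (prob μ (fun ω => (X ω, W ω)) (x, w) *
          prob μ (fun ω => (Y ω, W ω)) (y, w) / prob μ W w)
        = prob μ W w * prob μ W w / prob μ W w := by
      intro w
      have inner : ∀ x : α, ∑ y : β, (prob μ (fun ω => (X ω, W ω)) (x, w) *
            prob μ (fun ω => (Y ω, W ω)) (y, w) / prob μ W w)
          = prob μ (fun ω => (X ω, W ω)) (x, w) * prob μ W w / prob μ W w := by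
        intro x
        rw [← Finset.sum_div, ← Finset.mul_sum, sum_prob_pair_fst μ hY hW w]
      rw [Finset.sum_congr rfl (fun x _ => inner x), ← Finset.sum_div,
        ← Finset.sum_mul, sum_prob_pair_fst μ hX hW w]
    rw [Finset.sum_congr rfl (fun w _ => step3 w)]
    have step4 : ∀ w : γ, prob μ W w * prob μ W w / prob μ W w ≤ prob μ W w := by
      intro w
      rcases eq_or_ne (prob μ W w) 0 with h|h
      · simp [h]
      · rw [mul_div_assoc, div_self h, mul_one]
    calc ∑ w : γ, prob μ W w * prob μ W w / prob μ W w
        ≤ ∑ w : γ, prob μ W w := Finset.sum_le_sum (fun w _ => step4 w)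
      _ = 1 := sum_prob μ hW
  -- Gibbs inequality
  have core : ∑ m : α × β × γ, prob μ (fun ω => (X ω, Y ω, W ω)) m *
        Real.log (prob μ (fun ω => (X ω, W ω)) (m.1, m.2.2) *
          prob μ (fun ω => (Y ω, W ω)) m.2 / prob μ W m.2.2)
      ≤ ∑ m : α × β × γ, prob μ (fun ω => (X ω, Y ω, W ω)) m *
          Real.log (prob μ (fun ω => (X ω, Y ω, W ω)) m) := by
    apply kl_aux _ _ (fun m => my_prob_nonneg μ _ m)
      (fun m => div_nonneg (mul_nonneg (my_prob_nonneg μ _ _) (my_prob_nonneg μ _ _))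
        (my_prob_nonneg μ _ _))
      (fun m h => div_pos (mul_pos (hposu m h) (hposv m h)) (hposc m h))
    rw [sum_prob μ hM]
    exact hsumq
  -- split the log of the quotient
  have hsplit : ∑ m : α × β × γ, prob μ (fun ω => (X ω, Y ω, W ω)) m *
          Real.log (prob μ (fun ω => (X ω, W ω)) (m.1, m.2.2))
        + ∑ m : α × β × γ, prob μ (fun ω => (X ω, Y ω, W ω)) m *
          Real.log (prob μ (fun ω => (Y ω, W ω)) m.2)
        - ∑ m : α × β × γ, prob μ (fun ω => (X ω, Y ω, W ω)) m *
          Real.log (prob μ W m.2.2)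
      = ∑ m : α × β × γ, prob μ (fun ω => (X ω, Y ω, W ω)) m *
          Real.log (prob μ (fun ω => (X ω, W ω)) (m.1, m.2.2) *
            prob μ (fun ω => (Y ω, W ω)) m.2 / prob μ W m.2.2) := by
    rw [← Finset.sum_add_distrib, ← Finset.sum_sub_distrib]
    refine Finset.sum_congr rfl (fun m _ => ?_)
    rcases eq_or_lt_of_le (my_prob_nonneg μ (fun ω => (X ω, Y ω, W ω)) m) with h|h
    · rw [← h]; ring
    · rw [Real.log_div (mul_pos (hposu m h) (hposv m h)).ne' (hposc m h).ne',
        Real.log_mul (hposu m h).ne' (hposv m h).ne']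
      ring
  unfold condMutualInfo condEntropy
  rw [e4, e1, e2, e3, hM_entropy]
  linarith [core, hsplit]

end Info

section Indep
variable {Ω : Type*} [MeasurableSpace Ω] (μ : Measure Ω) [IsProbabilityMeasure μ]
variable {α β : Type*} [Fintype α] [Fintype β]
  [MeasurableSpace α] [MeasurableSingletonClass α]
  [MeasurableSpace β] [MeasurableSingletonClass β]

lemma indep_mutualInfo_zero {Y : Ω → α} {D : Ω → β} (hY : Measurable Y) (hD : Measurable D)
    (hIndep : ∀ (y : α) (d : β),
      prob μ (fun ω => (Y ω, D ω)) (y, d) = prob μ Y y * prob μ D d) :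
    mutualInfo μ Y D = 0 := by
  have key : ∑ t : α × β, prob μ (fun ω => (Y ω, D ω)) t *
        Real.log (prob μ (fun ω => (Y ω, D ω)) t)
      = ∑ y, prob μ Y y * Real.log (prob μ Y y)
        + ∑ d, prob μ D d * Real.log (prob μ D d) := by
    rw [Fintype.sum_prod_type]
    have h1 : ∀ (y : α) (d : β), prob μ (fun ω => (Y ω, D ω)) (y, d) *
          Real.log (prob μ (fun ω => (Y ω, D ω)) (y, d))
        = prob μ D d * (prob μ Y y * Real.log (prob μ Y y))
          + prob μ Y y * (prob μ D d * Real.log (prob μ D d)) := by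
      intro y d
      rw [hIndep y d]
      rcases eq_or_lt_of_le (my_prob_nonneg μ Y y) with h|h
      · rw [← h]; simp
      rcases eq_or_lt_of_le (my_prob_nonneg μ D d) with h2|h2
      · rw [← h2]; simp
      · rw [Real.log_mul h.ne' h2.ne']; ring
    have h2 : ∀ y : α, ∑ d : β, (prob μ D d * (prob μ Y y * Real.log (prob μ Y y))
          + prob μ Y y * (prob μ D d * Real.log (prob μ D d)))
        = prob μ Y y * Real.log (prob μ Y y)
          + prob μ Y y * (∑ d, prob μ D d * Real.log (prob μ D d)) := by
      intro y
      rw [Finset.sum_add_distrib, ← Finset.sum_mul, sum_prob μ hD, ← Finset.mul_sum]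
      ring
    calc ∑ y, ∑ d, prob μ (fun ω => (Y ω, D ω)) (y, d) *
          Real.log (prob μ (fun ω => (Y ω, D ω)) (y, d))
        = ∑ y, (prob μ Y y * Real.log (prob μ Y y)
            + prob μ Y y * (∑ d, prob μ D d * Real.log (prob μ D d))) := by
          refine Finset.sum_congr rfl (fun y _ => ?_)
          rw [Finset.sum_congr rfl (fun d _ => h1 y d), h2 y]
      _ = ∑ y, prob μ Y y * Real.log (prob μ Y y)
            + ∑ d, prob μ D d * Real.log (prob μ D d) := by
          rw [Finset.sum_add_distrib, ← Finset.sum_mul, sum_prob μ hY, one_mul]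
  unfold mutualInfo entropy
  rw [key]
  ring

end Indep

section Markov
variable {Ω : Type*} [MeasurableSpace Ω] (μ : Measure Ω) [IsProbabilityMeasure μ]
variable {𝓓 𝓨 𝓕 𝓩 : Type*} [Fintype 𝓓] [Fintype 𝓨] [Fintype 𝓕] [Fintype 𝓩]
  [MeasurableSpace 𝓓] [MeasurableSingletonClass 𝓓]
  [MeasurableSpace 𝓨] [MeasurableSingletonClass 𝓨]
  [MeasurableSpace 𝓕] [MeasurableSingletonClass 𝓕]
  [MeasurableSpace 𝓩] [MeasurableSingletonClass 𝓩]

lemma markov_condMI_zero {D : Ω → 𝓓} {Y : Ω → 𝓨} {F : Ω → 𝓕} {Z : Ω → 𝓩}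
    (hD : Measurable D) (hY : Measurable Y) (hF : Measurable F) (hZ : Measurable Z)
    (hMarkov : ∀ (z : 𝓩) (d : 𝓓) (y : 𝓨) (f : 𝓕),
      prob μ (fun ω => (Z ω, D ω, Y ω, F ω)) (z, d, y, f) * prob μ F f =
        prob μ (fun ω => (Z ω, F ω)) (z, f) *
          prob μ (fun ω => (D ω, Y ω, F ω)) (d, y, f)) :
    condMutualInfo μ Z (fun ω => (D ω, Y ω)) F = 0 := by
  have hM : Measurable (fun ω => (Z ω, D ω, Y ω, F ω)) :=
    hZ.prodMk (hD.prodMk (hY.prodMk hF))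
  have hDYF : Measurable (fun ω => (D ω, Y ω, F ω)) := hD.prodMk (hY.prodMk hF)
  have e1 : entropy μ (fun ω => (Z ω, F ω))
      = -∑ m : 𝓩 × 𝓓 × 𝓨 × 𝓕, prob μ (fun ω => (Z ω, D ω, Y ω, F ω)) m *
          Real.log (prob μ (fun ω => (Z ω, F ω)) (m.1, m.2.2.2)) :=
    entropy_comp' μ hM (fun m => (m.1, m.2.2.2)) rfl
  have e2 : entropy μ (fun ω => (D ω, Y ω, F ω))
      = -∑ m : 𝓩 × 𝓓 × 𝓨 × 𝓕, prob μ (fun ω => (Z ω, D ω, Y ω, F ω)) m *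
          Real.log (prob μ (fun ω => (D ω, Y ω, F ω)) m.2) :=
    entropy_comp' μ hM (fun m => m.2) rfl
  have e3 : entropy μ F
      = -∑ m : 𝓩 × 𝓓 × 𝓨 × 𝓕, prob μ (fun ω => (Z ω, D ω, Y ω, F ω)) m *
          Real.log (prob μ F m.2.2.2) :=
    entropy_comp' μ hM (fun m => m.2.2.2) rfl
  have hg4 : Function.Injective
      (fun m : 𝓩 × 𝓓 × 𝓨 × 𝓕 => ((m.1, (m.2.1, m.2.2.1)), m.2.2.2)) := by
    intro m m' h; simp [Prod.ext_iff] at h ⊢; tauto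
  have e4 : entropy μ (fun ω => ((Z ω, (D ω, Y ω)), F ω))
      = entropy μ (fun ω => (Z ω, D ω, Y ω, F ω)) :=
    entropy_eq_of_comp μ hM hg4 rfl
  have hg5 : Function.Injective (fun t : 𝓓 × 𝓨 × 𝓕 => ((t.1, t.2.1), t.2.2)) := by
    intro m m' h; simp [Prod.ext_iff] at h ⊢; tauto
  have e5 : entropy μ (fun ω => ((D ω, Y ω), F ω))
      = entropy μ (fun ω => (D ω, Y ω, F ω)) :=
    entropy_eq_of_comp μ hDYF hg5 rfl
  have key : ∀ m : 𝓩 × 𝓓 × 𝓨 × 𝓕,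
      prob μ (fun ω => (Z ω, D ω, Y ω, F ω)) m *
        Real.log (prob μ (fun ω => (Z ω, D ω, Y ω, F ω)) m)
      = prob μ (fun ω => (Z ω, D ω, Y ω, F ω)) m *
          Real.log (prob μ (fun ω => (Z ω, F ω)) (m.1, m.2.2.2))
        + prob μ (fun ω => (Z ω, D ω, Y ω, F ω)) m *
          Real.log (prob μ (fun ω => (D ω, Y ω, F ω)) m.2)
        - prob μ (fun ω => (Z ω, D ω, Y ω, F ω)) m *
          Real.log (prob μ F m.2.2.2) := by
    intro m
    rcases eq_or_lt_of_le (my_prob_nonneg μ (fun ω => (Z ω, D ω, Y ω, F ω)) m) with h|h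
    · rw [← h]; ring
    · have hc : 0 < prob μ F m.2.2.2 :=
        lt_of_lt_of_le h (prob_le_prob_comp' μ hM (fun m => m.2.2.2) rfl m)
      have hmark : prob μ (fun ω => (Z ω, D ω, Y ω, F ω)) m * prob μ F m.2.2.2
          = prob μ (fun ω => (Z ω, F ω)) (m.1, m.2.2.2) *
            prob μ (fun ω => (D ω, Y ω, F ω)) m.2 :=
        hMarkov m.1 m.2.1 m.2.2.1 m.2.2.2
      have huv : 0 < prob μ (fun ω => (Z ω, F ω)) (m.1, m.2.2.2) *
          prob μ (fun ω => (D ω, Y ω, F ω)) m.2 := hmark ▸ mul_pos h hc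
      have hu : 0 < prob μ (fun ω => (Z ω, F ω)) (m.1, m.2.2.2) := by
        rcases eq_or_lt_of_le (my_prob_nonneg μ (fun ω => (Z ω, F ω)) (m.1, m.2.2.2))
          with h'|h'
        · exfalso; rw [← h', zero_mul] at huv; exact lt_irrefl 0 huv
        · exact h'
      have hv : 0 < prob μ (fun ω => (D ω, Y ω, F ω)) m.2 := by
        rcases eq_or_lt_of_le (my_prob_nonneg μ (fun ω => (D ω, Y ω, F ω)) m.2) with h'|h'
        · exfalso; rw [← h', mul_zero] at huv; exact lt_irrefl 0 huv
        · exact h'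
      have hpeq : prob μ (fun ω => (Z ω, D ω, Y ω, F ω)) m
          = prob μ (fun ω => (Z ω, F ω)) (m.1, m.2.2.2) *
            prob μ (fun ω => (D ω, Y ω, F ω)) m.2 / prob μ F m.2.2.2 := by
        field_simp
        linarith [hmark]
      rw [hpeq, Real.log_div (mul_pos hu hv).ne' hc.ne', Real.log_mul hu.ne' hv.ne']
      ring
  have hsum : entropy μ (fun ω => (Z ω, D ω, Y ω, F ω))
      = entropy μ (fun ω => (Z ω, F ω)) + entropy μ (fun ω => (D ω, Y ω, F ω))
        - entropy μ F := by
    rw [e1, e2, e3]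
    have hME : entropy μ (fun ω => (Z ω, D ω, Y ω, F ω))
        = -∑ m : 𝓩 × 𝓓 × 𝓨 × 𝓕, prob μ (fun ω => (Z ω, D ω, Y ω, F ω)) m *
            Real.log (prob μ (fun ω => (Z ω, D ω, Y ω, F ω)) m) := rfl
    rw [hME, Finset.sum_congr rfl (fun m _ => key m),
      Finset.sum_sub_distrib, Finset.sum_add_distrib]
    ring
  unfold condMutualInfo condEntropy
  rw [e4, e5, hsum]
  ring

end Markov

/-- Key inequality in the proof of Proposition 4.1: if `(D,Y) → F → Z` is a Markov
chain and `Y` is independent of `D`, then `I(Z;D) ≤ I(Z;F) - I(Z;Y)`. -/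
theorem stmt1
    {Ω : Type*} [MeasurableSpace Ω] (μ : Measure Ω) [IsProbabilityMeasure μ]
    {𝓓 𝓨 𝓕 𝓩 : Type*} [Fintype 𝓓] [Fintype 𝓨] [Fintype 𝓕] [Fintype 𝓩]
    [MeasurableSpace 𝓓] [MeasurableSingletonClass 𝓓]
    [MeasurableSpace 𝓨] [MeasurableSingletonClass 𝓨]
    [MeasurableSpace 𝓕] [MeasurableSingletonClass 𝓕]
    [MeasurableSpace 𝓩] [MeasurableSingletonClass 𝓩]
    (D : Ω → 𝓓) (Y : Ω → 𝓨) (F : Ω → 𝓕) (Z : Ω → 𝓩)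
    (hD : Measurable D) (hY : Measurable Y) (hF : Measurable F) (hZ : Measurable Z)
    (hMarkov : ∀ (z : 𝓩) (d : 𝓓) (y : 𝓨) (f : 𝓕),
      prob μ (fun ω => (Z ω, D ω, Y ω, F ω)) (z, d, y, f) * prob μ F f =
        prob μ (fun ω => (Z ω, F ω)) (z, f) *
          prob μ (fun ω => (D ω, Y ω, F ω)) (d, y, f))
    (hIndep : ∀ (y : 𝓨) (d : 𝓓),
      prob μ (fun ω => (Y ω, D ω)) (y, d) = prob μ Y y * prob μ D d) :
    mutualInfo μ Z D ≤ mutualInfo μ Z F - mutualInfo μ Z Y := by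
  have hP : Measurable (fun ω => (D ω, Y ω)) := hD.prodMk hY
  have h1 : mutualInfo μ Z (fun ω => ((D ω, Y ω), F ω))
      = mutualInfo μ Z F + condMutualInfo μ Z (fun ω => (D ω, Y ω)) F :=
    mutualInfo_chain μ hZ hP hF
  have h0 : condMutualInfo μ Z (fun ω => (D ω, Y ω)) F = 0 :=
    markov_condMI_zero μ hD hY hF hZ hMarkov
  have h2 : mutualInfo μ Z (fun ω => ((D ω, Y ω), F ω))
      = mutualInfo μ Z (fun ω => (F ω, (D ω, Y ω))) :=
    mutualInfo_snd_comm μ hZ hP hF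
  have h3 : mutualInfo μ Z (fun ω => (F ω, (D ω, Y ω)))
      = mutualInfo μ Z (fun ω => (D ω, Y ω)) + condMutualInfo μ Z F (fun ω => (D ω, Y ω)) :=
    mutualInfo_chain μ hZ hF hP
  have h4 : 0 ≤ condMutualInfo μ Z F (fun ω => (D ω, Y ω)) :=
    condMutualInfo_nonneg μ hZ hF hP
  have h5 : mutualInfo μ Z (fun ω => (D ω, Y ω)) = mutualInfo μ Z (fun ω => (Y ω, D ω)) :=
    mutualInfo_snd_comm μ hZ hD hY
  have h6 : mutualInfo μ Z (fun ω => (Y ω, D ω))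
      = mutualInfo μ Z D + condMutualInfo μ Z Y D :=
    mutualInfo_chain μ hZ hY hD
  have h7 : condMutualInfo μ Z Y D = condMutualInfo μ Y Z D :=
    condMutualInfo_comm μ hZ hY hD
  have h8 : mutualInfo μ Y (fun ω => (Z ω, D ω))
      = mutualInfo μ Y D + condMutualInfo μ Y Z D :=
    mutualInfo_chain μ hY hZ hD
  have h9 : mutualInfo μ Y D = 0 := indep_mutualInfo_zero μ hY hD hIndep
  have h10 : mutualInfo μ Y (fun ω => (Z ω, D ω)) = mutualInfo μ Y (fun ω => (D ω, Z ω)) :=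
    mutualInfo_snd_comm μ hY hZ hD
  have h11 : mutualInfo μ Y (fun ω => (D ω, Z ω))
      = mutualInfo μ Y Z + condMutualInfo μ Y D Z :=
    mutualInfo_chain μ hY hD hZ
  have h12 : 0 ≤ condMutualInfo μ Y D Z := condMutualInfo_nonneg μ hY hD hZ
  have h13 : mutualInfo μ Y Z = mutualInfo μ Z Y := mutualInfo_comm μ hY hZ
  linarith
end

section
/- Let 𝓕 be a finite nonempty type of strata, let K be a finite nonempty type of class labels, let p : 𝓕 → ℝ be nonnegative weights with Σ_{f ∈ 𝓕} p f = 1, and let g : 𝓕 → K → ℝ be a score function. Define the softmax σ(v)_y = exp(v y) / Σ_{k ∈ K} exp(v k) for v : K → ℝ. Then for every y ∈ K, the normalized weighted geometric mean of the softmax outputs equals the softmax of the expected scores: (Π_{f ∈ 𝓕} (σ(g f)_y)^{p f}) / (Σ_{k ∈ K} Π_{f ∈ 𝓕} (σ(g f)_k)^{p f}) = exp(Σ_{f ∈ 𝓕} p f · g f y) / (Σ_{k ∈ K} exp(Σ_{f ∈ 𝓕} p f · g f k)), i.e. it equals σ(Σ_{f} p f • g f)_y. -/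
open Real

/-- The softmax function on a finite type of class labels. -/
noncomputable def softmax {K : Type*} [Fintype K] (v : K → ℝ) (y : K) : ℝ :=
  Real.exp (v y) / ∑ k, Real.exp (v k)

/-- The normalized weighted geometric mean (NWGM) of softmax outputs over strata,
weighted by probabilities `p`, equals the softmax of the `p`-averaged scores. -/
theorem stmt6
    {𝓕 K : Type*} [Fintype 𝓕] [Nonempty 𝓕] [Fintype K] [Nonempty K]
    (p : 𝓕 → ℝ) (hp : ∀ f, 0 ≤ p f) (hsum : ∑ f, p f = 1)
    (g : 𝓕 → K → ℝ) (y : K) :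
    (∏ f, (softmax (g f) y) ^ (p f)) / (∑ k, ∏ f, (softmax (g f) k) ^ (p f))
      = softmax (fun k => ∑ f, p f * g f k) y := by
  have hD : ∀ f : 𝓕, (0:ℝ) < ∑ k, Real.exp (g f k) :=
    fun f => Finset.sum_pos (fun k _ => Real.exp_pos _) Finset.univ_nonempty
  set C : ℝ := ∏ f, (∑ k, Real.exp (g f k)) ^ (p f) with hC
  have hCpos : 0 < C := Finset.prod_pos fun f _ => Real.rpow_pos_of_pos (hD f) _
  have key : ∀ k : K, (∏ f, (softmax (g f) k) ^ (p f))
      = Real.exp (∑ f, p f * g f k) / C := by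
    intro k
    rw [Real.exp_sum, hC, ← Finset.prod_div_distrib]
    refine Finset.prod_congr rfl fun f _ => ?_
    rw [softmax, Real.div_rpow (Real.exp_pos _).le (hD f).le,
      Real.rpow_def_of_pos (Real.exp_pos _), Real.log_exp, mul_comm]
  rw [key y, Finset.sum_congr rfl fun k _ => key k, ← Finset.sum_div, softmax,
    div_div_div_cancel_right₀ hCpos.ne']
end
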